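/- For odd j ≥ 1 and 0 ≤ τ < 1, I_j := ∫_0^∞ y^j erfc(√(2/(1−τ)) y) e^{y²} dy equals ((−1)^{(j−1)/2} ((j−1)/2)! / 2) · ( √(2/(1+τ)) Σ_{p=0}^{(j−1)/2} (−1)^p ((1−τ)/(1+τ))^p (1/2)_p / p! − 1 ), where (a)_p denotes the Pochhammer symbol. -/

import Mathlib

/-!
Put `a = √(2/(1-τ)) > 1`, `b = a² - 1 = (1+τ)/(1-τ)` and `E(y) = erfc(a y) e^{y²}`. Since
`E' = 2y E - (2a/√π) e^{-b y²}`, integrating `(y^{2n} E/2)'` over `(0, ∞)` gives the recurrence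
`K_n = c_n - n K_{n-1}` for `K_n = ∫ y^{2n+1} E` (with `K_0 = c_0 - 1/2`, the boundary term),
where `c_n = (a/√π) ∫ y^{2n} e^{-b y²} = a (1/2)_n / (2 b^n √b)` is a Gaussian moment. The bound
`erfc(x) e^{x²} ≤ 1` gives `E(y) ≤ e^{-b y²}`, which justifies the integration by parts.
Unrolling the recurrence produces the alternating sum.
-/

open MeasureTheory

/-- The complementary error function `erfc(x) = (2/√π) ∫_x^∞ e^{-t²} dt`. -/
noncomputable def erfc (x : ℝ) : ℝ :=
  (2 / Real.sqrt Real.pi) * ∫ t in Set.Ioi x, Real.exp (-t ^ 2)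

/-- `I_j = ∫_0^∞ y^j erfc(√(2/(1-τ)) y) e^{y²} dy`. -/
noncomputable def Ij (τ : ℝ) (j : ℕ) : ℝ :=
  ∫ y in Set.Ioi (0 : ℝ), y ^ j * erfc (Real.sqrt (2 / (1 - τ)) * y) * Real.exp (y ^ 2)

/-- The Pochhammer symbol `(1/2)_p = (1/2)(3/2)⋯(1/2 + p - 1)`. -/
noncomputable def pochHalf (p : ℕ) : ℝ :=
  ∏ i ∈ Finset.range p, ((1 : ℝ) / 2 + i)

open Set Real Filter Topology

lemma integrable_exp_neg_sq : Integrable fun t : ℝ => exp (-t ^ 2) := by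
  simpa using integrable_exp_neg_mul_sq one_pos

lemma integral_exp_neg_sq_Ioi_zero : ∫ t in Ioi (0 : ℝ), exp (-t ^ 2) = √π / 2 := by
  simpa using integral_gaussian_Ioi 1

lemma erfc_zero : erfc 0 = 1 := by
  rw [erfc, integral_exp_neg_sq_Ioi_zero]
  field_simp

lemma erfc_nonneg (x : ℝ) : 0 ≤ erfc x :=
  mul_nonneg (by positivity) (setIntegral_nonneg measurableSet_Ioi fun t _ => (exp_pos _).le)

lemma erfc_eq_one_sub_intervalIntegral (x : ℝ) :
    erfc x = 1 - 2 / √π * ∫ t in (0 : ℝ)..x, exp (-t ^ 2) := by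
  rw [← intervalIntegral.integral_Ioi_sub_Ioi' integrable_exp_neg_sq.integrableOn
    integrable_exp_neg_sq.integrableOn, mul_sub, ← erfc_zero]
  simp only [erfc]
  ring

lemma hasDerivAt_erfc (x : ℝ) : HasDerivAt erfc (-(2 / √π) * exp (-x ^ 2)) x := by
  have hF := (((continuous_exp.comp (continuous_pow 2).neg).integral_hasStrictDerivAt 0 x)
    |>.hasDerivAt.const_mul (2 / √π)).const_sub 1
  rw [funext erfc_eq_one_sub_intervalIntegral]
  simpa [neg_mul] using hF

@[fun_prop]
lemma continuous_erfc : Continuous erfc :=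
  continuous_iff_continuousAt.2 fun x => (hasDerivAt_erfc x).continuousAt

/-- Comparison with the Gaussian tail: `x² - t² ≤ -(t - x)²` for `0 ≤ x ≤ t`. -/
lemma erfc_mul_exp_sq_le_one {x : ℝ} (hx : 0 ≤ x) : erfc x * exp (x ^ 2) ≤ 1 := by
  have hshift : ∫ t in Ioi x, exp (-(t - x) ^ 2) = √π / 2 := by
    have h := (measurePreserving_sub_right volume x).setIntegral_preimage_emb
      (measurableEmbedding_subRight x) (fun s => exp (-s ^ 2)) (Ioi 0)
    rwa [preimage_sub_const_Ioi, zero_add, integral_exp_neg_sq_Ioi_zero] at h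
  have hle : ∫ t in Ioi x, exp (-t ^ 2) * exp (x ^ 2) ≤ ∫ t in Ioi x, exp (-(t - x) ^ 2) := by
    refine setIntegral_mono_on (integrable_exp_neg_sq.mul_const _).integrableOn
      (integrable_exp_neg_sq.comp_sub_right x).integrableOn measurableSet_Ioi fun t ht => ?_
    rw [← exp_add, exp_le_exp]
    nlinarith [mem_Ioi.1 ht]
  rw [integral_mul_const, hshift] at hle
  calc erfc x * exp (x ^ 2) = 2 / √π * ((∫ t in Ioi x, exp (-t ^ 2)) * exp (x ^ 2)) := by
        rw [erfc, mul_assoc]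
    _ ≤ 2 / √π * (√π / 2) := by gcongr
    _ = 1 := by field_simp

lemma erfc_mul_mul_exp_sq_le {a y : ℝ} (ha : 0 ≤ a) (hy : 0 ≤ y) :
    erfc (a * y) * exp (y ^ 2) ≤ exp (-(a ^ 2 - 1) * y ^ 2) := by
  calc erfc (a * y) * exp (y ^ 2)
      = erfc (a * y) * exp ((a * y) ^ 2) * exp (-(a ^ 2 - 1) * y ^ 2) := by
        rw [mul_assoc, ← exp_add]; ring_nf
    _ ≤ exp (-(a ^ 2 - 1) * y ^ 2) :=
        mul_le_of_le_one_left (exp_pos _).le (erfc_mul_exp_sq_le_one (mul_nonneg ha hy))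

lemma Gamma_nat_add_half_eq_pochHalf (n : ℕ) : Gamma (n + 1 / 2) = pochHalf n * √π := by
  induction n with
  | zero => simpa [pochHalf] using Gamma_one_half_eq
  | succ k ih =>
    rw [Nat.cast_succ, add_right_comm, Gamma_add_one (by positivity), ih, pochHalf, pochHalf,
      Finset.prod_range_succ]
    ring

lemma integrableOn_pow_mul_exp_neg_mul_sq {b : ℝ} (hb : 0 < b) (n : ℕ) :
    IntegrableOn (fun y : ℝ => y ^ n * exp (-b * y ^ 2)) (Ioi 0) := by
  simpa only [rpow_natCast] using
    integrableOn_rpow_mul_exp_neg_mul_sq hb (s := n) (by linarith [n.cast_nonneg (α := ℝ)])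

lemma integral_pow_two_mul_mul_exp_neg_mul_sq {b : ℝ} (hb : 0 < b) (n : ℕ) :
    ∫ y in Ioi (0 : ℝ), y ^ (2 * n) * exp (-b * y ^ 2) = pochHalf n * √π / (2 * b ^ n * √b) := by
  have h := integral_rpow_mul_exp_neg_mul_rpow (p := 2) (q := (2 * n : ℕ)) two_pos
    (by linarith [(2 * n).cast_nonneg (α := ℝ)]) hb
  simp only [rpow_natCast, rpow_two] at h
  rw [h, show (((2 * n : ℕ) : ℝ) + 1) / 2 = n + 1 / 2 by push_cast; ring,
    show -(((2 * n : ℕ) : ℝ) + 1) / 2 = -(n + 1 / 2) by push_cast; ring,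
    Gamma_nat_add_half_eq_pochHalf, rpow_neg hb.le, rpow_add hb, rpow_natCast, ← sqrt_eq_rpow]
  field_simp

lemma tendsto_pow_mul_exp_neg_mul_sq_atTop {b : ℝ} (hb : 0 < b) (n : ℕ) :
    Tendsto (fun y : ℝ => y ^ n * exp (-b * y ^ 2)) atTop (𝓝 0) := by
  have h := (rpow_mul_exp_neg_mul_sq_isLittleO_exp_neg hb n).trans_tendsto
    (tendsto_exp_atBot.comp (tendsto_id.const_mul_atTop_of_neg (by norm_num : -(1 / 2 : ℝ) < 0)))
  simpa only [rpow_natCast] using h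

lemma hasDerivAt_erfc_mul_mul_exp_sq (a y : ℝ) :
    HasDerivAt (fun y => erfc (a * y) * exp (y ^ 2))
      (2 * y * (erfc (a * y) * exp (y ^ 2)) - 2 * a / √π * exp (-(a ^ 2 - 1) * y ^ 2)) y := by
  have h := ((hasDerivAt_erfc (a * y)).comp y ((hasDerivAt_id y).const_mul a)).mul
    ((hasDerivAt_pow 2 y).exp)
  refine h.congr_deriv ?_
  rw [show -(a ^ 2 - 1) * y ^ 2 = -(a * y) ^ 2 + y ^ 2 by ring, exp_add]
  simp only [Function.comp_apply, Nat.cast_ofNat]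
  ring

lemma integrableOn_pow_mul_erfc_mul_exp_sq {a : ℝ} (ha : 1 < a) (n : ℕ) :
    IntegrableOn (fun y => y ^ n * (erfc (a * y) * exp (y ^ 2))) (Ioi 0) := by
  have hb : 0 < a ^ 2 - 1 := by nlinarith
  refine (integrableOn_pow_mul_exp_neg_mul_sq hb n).mono' (by fun_prop) ?_
  filter_upwards [ae_restrict_mem measurableSet_Ioi] with y hy
  have hy : 0 ≤ y := le_of_lt hy
  rw [norm_of_nonneg (by have := erfc_nonneg (a * y); positivity)]
  exact mul_le_mul_of_nonneg_left (erfc_mul_mul_exp_sq_le (by linarith) hy) (by positivity)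

/-- Integration by parts against `d/dy [y ^ k * erfc (a * y) * exp (y ^ 2) / 2]`, whose value at `0`
is `0 ^ k / 2`; at `k = 0` the truncated `k - 1` is harmless, being multiplied by `k`. -/
lemma integral_pow_succ_mul_erfc_mul_exp_sq {a : ℝ} (ha : 1 < a) (k : ℕ) :
    ∫ y in Ioi (0 : ℝ), y ^ (k + 1) * (erfc (a * y) * exp (y ^ 2)) =
      a / √π * (∫ y in Ioi (0 : ℝ), y ^ k * exp (-(a ^ 2 - 1) * y ^ 2))
        - k / 2 * (∫ y in Ioi (0 : ℝ), y ^ (k - 1) * (erfc (a * y) * exp (y ^ 2))) - 0 ^ k / 2 := by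
  have hb : 0 < a ^ 2 - 1 := by nlinarith
  set E : ℝ → ℝ := fun y => erfc (a * y) * exp (y ^ 2) with hE
  set G : ℝ → ℝ := fun y => exp (-(a ^ 2 - 1) * y ^ 2) with hG
  have hderiv : ∀ y, HasDerivAt (fun y => y ^ k * E y / 2)
      (k / 2 * (y ^ (k - 1) * E y) + y ^ (k + 1) * E y - a / √π * (y ^ k * G y)) y := by
    intro y
    refine (((hasDerivAt_pow k y).mul (hasDerivAt_erfc_mul_mul_exp_sq a y)).div_const 2)
      |>.congr_deriv ?_
    simp only [hE, hG]
    ring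
  have hA := (integrableOn_pow_mul_erfc_mul_exp_sq ha (k - 1)).const_mul (k / 2 : ℝ)
  have hB := integrableOn_pow_mul_erfc_mul_exp_sq ha (k + 1)
  have hC := (integrableOn_pow_mul_exp_neg_mul_sq hb k).const_mul (a / √π)
  have hlim : Tendsto (fun y => y ^ k * E y / 2) atTop (𝓝 0) := by
    have hmaj := (tendsto_pow_mul_exp_neg_mul_sq_atTop hb k).div_const 2
    rw [zero_div] at hmaj
    refine tendsto_of_tendsto_of_tendsto_of_le_of_le' tendsto_const_nhds hmaj ?_ ?_
    all_goals filter_upwards [eventually_ge_atTop 0] with y hy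
    · have := erfc_nonneg (a * y)
      positivity
    · gcongr
      exact erfc_mul_mul_exp_sq_le (by linarith) hy
  have hFTC := integral_Ioi_of_hasDerivAt_of_tendsto (by fun_prop) (fun y _ => hderiv y)
    ((hA.add hB).sub hC) hlim
  simp only [hE, hG] at hFTC
  rw [integral_sub ?_ hC, integral_add hA hB, integral_const_mul, integral_const_mul] at hFTC
  · simp only [mul_zero, erfc_zero, ne_eq, OfNat.ofNat_ne_zero, not_false_eq_true, zero_pow,
      exp_zero, mul_one] at hFTC
    linarith
  · exact hA.add hB

open Finset in
lemma eq_factorial_mul_alternating_sum_of_recurrence {K c : ℕ → ℝ} (h0 : K 0 = c 0 - 1 / 2)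
    (hsucc : ∀ n, K (n + 1) = c (n + 1) - (n + 1) * K n) (n : ℕ) :
    K n = (-1) ^ n * n.factorial * (∑ p ∈ range (n + 1), (-1) ^ p * c p / p.factorial - 1 / 2) := by
  induction n with
  | zero => simp [h0]
  | succ n ih =>
    have hsq : ((-1 : ℝ) ^ n) ^ 2 = 1 := by rw [← pow_mul, mul_comm, pow_mul]; norm_num
    rw [hsucc, ih, sum_range_succ _ (n + 1), Nat.factorial_succ, Nat.cast_mul, pow_succ]
    push_cast
    field_simp
    linear_combination (-2 * c (n + 1)) * hsq

open Finset in
lemma integral_pow_two_mul_add_one_mul_erfc_mul_exp_sq {a : ℝ} (ha : 1 < a) (m : ℕ) :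
    ∫ y in Ioi (0 : ℝ), y ^ (2 * m + 1) * (erfc (a * y) * exp (y ^ 2)) =
      (-1) ^ m * m.factorial / 2 * (a / √(a ^ 2 - 1) *
        ∑ p ∈ range (m + 1), (-1) ^ p * ((a ^ 2 - 1)⁻¹) ^ p * pochHalf p / p.factorial - 1) := by
  have hb : 0 < a ^ 2 - 1 := by nlinarith
  have hmoment (n : ℕ) := integral_pow_two_mul_mul_exp_neg_mul_sq hb n
  rw [eq_factorial_mul_alternating_sum_of_recurrence
    (K := fun n => ∫ y in Ioi (0 : ℝ), y ^ (2 * n + 1) * (erfc (a * y) * exp (y ^ 2)))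
    (c := fun n => a / √π * ∫ y in Ioi (0 : ℝ), y ^ (2 * n) * exp (-(a ^ 2 - 1) * y ^ 2)) ?_ ?_ m]
  · have hterm (p : ℕ) :
        (-1) ^ p * (a / √π * (pochHalf p * √π / (2 * (a ^ 2 - 1) ^ p * √(a ^ 2 - 1)))) / p.factorial
          = a / √(a ^ 2 - 1) / 2 * ((-1) ^ p * ((a ^ 2 - 1)⁻¹) ^ p * pochHalf p / p.factorial) := by
      field_simp
      rw [mul_assoc, ← mul_pow, mul_one_div_cancel hb.ne', one_pow, mul_one]
    simp only [hmoment, hterm, ← mul_sum]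
    ring
  · simpa using integral_pow_succ_mul_erfc_mul_exp_sq ha 0
  · intro n
    have h := integral_pow_succ_mul_erfc_mul_exp_sq ha (2 * (n + 1))
    rw [show 2 * (n + 1) - 1 = 2 * n + 1 by omega, zero_pow (by omega)] at h
    rw [h]
    push_cast
    ring

/-- closed form for `I_j`, `j = 2m+1` odd. -/
theorem Ij_closed_form (τ : ℝ) (hτ0 : 0 ≤ τ) (hτ1 : τ < 1) (m : ℕ) :
    Ij τ (2 * m + 1) =
      ((-1 : ℝ) ^ m * m.factorial / 2) *
        (Real.sqrt (2 / (1 + τ)) *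
          ∑ p ∈ Finset.range (m + 1),
            (-1 : ℝ) ^ p * ((1 - τ) / (1 + τ)) ^ p * pochHalf p / p.factorial - 1) := by
  have h1m : 0 < 1 - τ := by linarith
  have h1p : 0 < 1 + τ := by linarith
  have ha : 1 < √(2 / (1 - τ)) := by
    rw [lt_sqrt zero_le_one, one_pow, one_lt_div h1m]
    linarith
  have hb : √(2 / (1 - τ)) ^ 2 - 1 = (1 + τ) / (1 - τ) := by
    rw [sq_sqrt (by positivity)]
    field_simp
    ring
  have hratio : √(2 / (1 - τ)) / √((1 + τ) / (1 - τ)) = √(2 / (1 + τ)) := by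
    rw [← sqrt_div' _ (by positivity)]
    field_simp
  have h := integral_pow_two_mul_add_one_mul_erfc_mul_exp_sq ha m
  rw [hb, hratio, inv_div] at h
  simpa only [Ij, mul_assoc] using h
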